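/- arXiv:1412.0267 — 2 statements merged into one kernel-verified Lean document; each statement's English description precedes it below -/
import Mathlib

section
/- Under the setup where ψ(W,h) satisfies E[ψ(W_i,h)k(X_i/h)] = 0 and (1/h)Var(ψ(W_i,h)k(X_i/h)) = 1 for all small h, and where E[ψ(W_i,0) | |X_i| = t] and |(ψ(W_i,t) − ψ(W_i,0))k(X_i/t)| are bounded by a modulus ℓ(t) → 0, and (1/h)E[k(X_i/h)] → f_{|X|}(0)∫₀^∞ k > 0, we have E[ψ(W_i,0) | |X_i| = 0] = 0. -/
open MeasureTheory Filter Set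

/-- If `E[ψ(W,h) k(X/h)] = 0` for all small `h > 0`, the conditional mean
`μ̃(t) = E[ψ(W,0) | |X| = t]` is continuous at `0` with modulus `ℓ(t) → 0`, the
discrepancy `|(ψ(W,t) − ψ(W,0)) k(X/t)|` is bounded by `ℓ(t)`, and
`(1/h) E[k(X/h)] → c > 0`, then `μ̃(0) = E[ψ(W,0) | |X| = 0] = 0`. -/
theorem cond_mean_at_zero {Ω : Type*} [MeasureSpace Ω]
    [IsProbabilityMeasure (volume : Measure Ω)]
    (ψ : ℝ → Ω → ℝ) (X : Ω → ℝ) (k μt ℓ : ℝ → ℝ) (c A Bk M : ℝ)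
    (hψm : ∀ h, Measurable (ψ h)) (hX : Measurable X) (hk : Measurable k)
    (hμm : Measurable μt)
    (hA : 0 < A) (hkb : ∀ u, |k u| ≤ Bk) (hksupp : ∀ u, A < |u| → k u = 0)
    (hM : ∀ h ω, |ψ h ω * k (X ω / h)| ≤ M)
    (hzero : ∀ᶠ h in nhdsWithin 0 (Ioi 0), (∫ ω : Ω, ψ h ω * k (X ω / h)) = 0)
    (htower : ∀ h : ℝ, 0 < h →
      (∫ ω : Ω, ψ 0 ω * k (X ω / h)) = ∫ ω : Ω, μt |X ω| * k (X ω / h))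
    (hμmod : ∀ t : ℝ, 0 ≤ t → |μt t - μt 0| ≤ ℓ t)
    (hψmod : ∀ (t : ℝ) (ω : Ω), 0 < t → |(ψ t ω - ψ 0 ω) * k (X ω / t)| ≤ ℓ t)
    (hℓnn : ∀ t, 0 ≤ ℓ t) (hℓmono : MonotoneOn ℓ (Ici 0))
    (hℓ0 : Tendsto ℓ (nhdsWithin 0 (Ioi 0)) (nhds 0))
    (hkint : Tendsto (fun h => (1 / h) * ∫ ω : Ω, k (X ω / h))
      (nhdsWithin 0 (Ioi 0)) (nhds c))
    (hc : 0 < c)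
    (hmass : ∃ C : ℝ, ∀ᶠ h in nhdsWithin 0 (Ioi 0),
      ((volume : Measure Ω) {ω | |X ω| ≤ A * h}).toReal ≤ C * h) :
    μt 0 = 0 := by
  obtain ⟨C, hC⟩ := hmass
  have hBk : 0 ≤ Bk := le_trans (abs_nonneg _) (hkb 0)
  -- basic integrability helper
  have intg : ∀ (f : Ω → ℝ) (B : ℝ), Measurable f → (∀ ω, |f ω| ≤ B) →
      Integrable f := fun f B hf hb =>
    (integrable_const B).mono' hf.aestronglyMeasurable
      (ae_of_all _ fun ω => by simpa [Real.norm_eq_abs] using hb ω)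
  have hkm : ∀ h : ℝ, Measurable fun ω => k (X ω / h) :=
    fun h => hk.comp (hX.div_const h)
  -- key pointwise facts for h > 0
  have key : ∀ h : ℝ, 0 < h → ∀ ω : Ω, A * h < |X ω| → k (X ω / h) = 0 := by
    intro h hh ω hlt
    exact hksupp _ (by rw [abs_div, abs_of_pos hh]; exact (lt_div_iff₀ hh).2 (by linarith))
  have hμbound : ∀ h : ℝ, 0 < h → ∀ ω : Ω,
      |(μt |X ω| - μt 0) * k (X ω / h)| ≤ ℓ (A * h) * Bk := by
    intro h hh ω
    rcases le_or_gt (|X ω|) (A * h) with hle | hlt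
    · rw [abs_mul]
      have h1 : |μt |X ω| - μt 0| ≤ ℓ (A * h) :=
        le_trans (hμmod _ (abs_nonneg _))
          (hℓmono (Set.mem_Ici.2 (abs_nonneg _)) (Set.mem_Ici.2 (mul_pos hA hh).le) hle)
      exact mul_le_mul h1 (hkb _) (abs_nonneg _) (hℓnn _)
    · simp [key h hh ω hlt, mul_nonneg (hℓnn _) hBk]
  have hsmeas : ∀ h : ℝ, MeasurableSet {ω : Ω | |X ω| ≤ A * h} :=
    fun h => measurableSet_le hX.abs measurable_const
  -- integrabilities
  have I1 : ∀ h : ℝ, Integrable fun ω => ψ h ω * k (X ω / h) :=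
    fun h => intg _ M ((hψm h).mul (hkm h)) (hM h)
  have I2 : ∀ h : ℝ, 0 < h → Integrable fun ω => (ψ h ω - ψ 0 ω) * k (X ω / h) :=
    fun h hh => intg _ (ℓ h) (((hψm h).sub (hψm 0)).mul (hkm h)) (fun ω => hψmod h ω hh)
  have I0 : ∀ h : ℝ, 0 < h → Integrable fun ω => ψ 0 ω * k (X ω / h) := by
    intro h hh
    have heq : (fun ω => ψ 0 ω * k (X ω / h)) =
        fun ω => ψ h ω * k (X ω / h) - (ψ h ω - ψ 0 ω) * k (X ω / h) := by
      funext ω; ring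
    rw [heq]
    exact (I1 h).sub (I2 h hh)
  have I3 : ∀ h : ℝ, 0 < h → Integrable fun ω => (μt |X ω| - μt 0) * k (X ω / h) :=
    fun h hh => intg _ (ℓ (A * h) * Bk)
      (((hμm.comp hX.abs).sub measurable_const).mul (hkm h)) (hμbound h hh)
  have Ik : ∀ h : ℝ, Integrable fun ω => k (X ω / h) :=
    fun h => intg _ Bk (hkm h) (fun ω => hkb _)
  -- integral bounds via the support set
  have bound1 : ∀ h : ℝ, 0 < h →
      |∫ ω : Ω, (μt |X ω| - μt 0) * k (X ω / h)| ≤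
        ℓ (A * h) * Bk * ((volume : Measure Ω) {ω | |X ω| ≤ A * h}).toReal := by
    intro h hh
    have hb : ∀ ω, |(μt |X ω| - μt 0) * k (X ω / h)| ≤
        Set.indicator {ω : Ω | |X ω| ≤ A * h} (fun _ => ℓ (A * h) * Bk) ω := by
      intro ω
      rcases le_or_gt (|X ω|) (A * h) with hle | hlt
      · rw [Set.indicator_of_mem (show ω ∈ {ω : Ω | |X ω| ≤ A * h} from hle)]; exact hμbound h hh ω
      · rw [Set.indicator_of_notMem (by simpa using hlt.not_ge)]
        simp [key h hh ω hlt]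
    calc |∫ ω : Ω, (μt |X ω| - μt 0) * k (X ω / h)|
        ≤ ∫ ω : Ω, |(μt |X ω| - μt 0) * k (X ω / h)| := by
          simpa only [Real.norm_eq_abs] using
            norm_integral_le_integral_norm (μ := volume)
              (fun ω => (μt |X ω| - μt 0) * k (X ω / h))
      _ ≤ ∫ ω : Ω, Set.indicator {ω : Ω | |X ω| ≤ A * h} (fun _ => ℓ (A * h) * Bk) ω :=
          integral_mono (I3 h hh).abs ((integrable_const _).indicator (hsmeas h)) hb
      _ = ℓ (A * h) * Bk * ((volume : Measure Ω) {ω | |X ω| ≤ A * h}).toReal := by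
          rw [integral_indicator_const _ (hsmeas h)]; simp [mul_comm, Measure.real]
  have bound2 : ∀ h : ℝ, 0 < h →
      |∫ ω : Ω, (ψ h ω - ψ 0 ω) * k (X ω / h)| ≤
        ℓ h * ((volume : Measure Ω) {ω | |X ω| ≤ A * h}).toReal := by
    intro h hh
    have hb : ∀ ω, |(ψ h ω - ψ 0 ω) * k (X ω / h)| ≤
        Set.indicator {ω : Ω | |X ω| ≤ A * h} (fun _ => ℓ h) ω := by
      intro ω
      rcases le_or_gt (|X ω|) (A * h) with hle | hlt
      · rw [Set.indicator_of_mem (show ω ∈ {ω : Ω | |X ω| ≤ A * h} from hle)]; exact hψmod h ω hh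
      · rw [Set.indicator_of_notMem (by simpa using hlt.not_ge)]
        simp [key h hh ω hlt]
    calc |∫ ω : Ω, (ψ h ω - ψ 0 ω) * k (X ω / h)|
        ≤ ∫ ω : Ω, |(ψ h ω - ψ 0 ω) * k (X ω / h)| := by
          simpa only [Real.norm_eq_abs] using
            norm_integral_le_integral_norm (μ := volume)
              (fun ω => (ψ h ω - ψ 0 ω) * k (X ω / h))
      _ ≤ ∫ ω : Ω, Set.indicator {ω : Ω | |X ω| ≤ A * h} (fun _ => ℓ h) ω :=
          integral_mono (I2 h hh).abs ((integrable_const _).indicator (hsmeas h)) hb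
      _ = ℓ h * ((volume : Measure Ω) {ω | |X ω| ≤ A * h}).toReal := by
          rw [integral_indicator_const _ (hsmeas h)]; simp [mul_comm, Measure.real]
  -- algebraic decomposition
  set F : ℝ → ℝ := fun h =>
    (1 / h) * (∫ ω : Ω, (μt |X ω| - μt 0) * k (X ω / h)) +
    (1 / h) * (∫ ω : Ω, (ψ h ω - ψ 0 ω) * k (X ω / h)) with hF
  have hself : ∀ᶠ h in nhdsWithin (0:ℝ) (Ioi 0), h ∈ Ioi (0:ℝ) :=
    eventually_mem_nhdsWithin
  have decomp : ∀ᶠ h in nhdsWithin (0:ℝ) (Ioi 0),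
      μt 0 * ((1 / h) * ∫ ω : Ω, k (X ω / h)) = -F h := by
    filter_upwards [hzero, hself] with h hz hh
    have hh : (0:ℝ) < h := hh
    have e1 : (∫ ω : Ω, ψ h ω * k (X ω / h)) =
        (∫ ω : Ω, ψ 0 ω * k (X ω / h)) + ∫ ω : Ω, (ψ h ω - ψ 0 ω) * k (X ω / h) := by
      rw [← integral_add (I0 h hh) (I2 h hh)]
      congr 1; funext ω; ring
    have e2 : (∫ ω : Ω, μt |X ω| * k (X ω / h)) =
        μt 0 * (∫ ω : Ω, k (X ω / h)) + ∫ ω : Ω, (μt |X ω| - μt 0) * k (X ω / h) := by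
      rw [← integral_const_mul, ← integral_add ((Ik h).const_mul _) (I3 h hh)]
      congr 1; funext ω; ring
    have hsum : (∫ ω : Ω, (μt |X ω| - μt 0) * k (X ω / h)) +
        (∫ ω : Ω, (ψ h ω - ψ 0 ω) * k (X ω / h)) = -(μt 0 * ∫ ω : Ω, k (X ω / h)) := by
      have h1 := hz
      rw [e1, htower h hh, e2] at h1
      linarith
    simp only [hF]
    rw [← mul_add, hsum]
    ring
  -- F tends to 0
  have hAh : Tendsto (fun h : ℝ => A * h) (nhdsWithin 0 (Ioi 0)) (nhdsWithin 0 (Ioi 0)) := by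
    apply tendsto_nhdsWithin_of_tendsto_nhds_of_eventually_within
    · have : Tendsto (fun h : ℝ => A * h) (nhds 0) (nhds (A * 0)) :=
        (continuous_const.mul continuous_id).tendsto 0
      rw [mul_zero] at this
      exact this.mono_left nhdsWithin_le_nhds
    · filter_upwards [hself] with h hh
      exact mul_pos hA hh
  have hFtendsto : Tendsto F (nhdsWithin (0:ℝ) (Ioi 0)) (nhds 0) := by
    have hg : Tendsto (fun h : ℝ => ℓ (A * h) * Bk * C + ℓ h * C)
        (nhdsWithin 0 (Ioi 0)) (nhds 0) := by
      have h1 : Tendsto (fun h : ℝ => ℓ (A * h)) (nhdsWithin 0 (Ioi 0)) (nhds 0) :=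
        hℓ0.comp hAh
      have := ((h1.mul_const Bk).mul_const C).add (hℓ0.mul_const C)
      simpa using this
    apply squeeze_zero_norm' _ hg
    filter_upwards [hC, hself] with h hCh hh
    have hh : (0:ℝ) < h := hh
    have h0 : h ≠ 0 := ne_of_gt hh
    have m1 := bound1 h hh
    have m2 := bound2 h hh
    have hμnn : (0:ℝ) ≤ ((volume : Measure Ω) {ω | |X ω| ≤ A * h}).toReal :=
      ENNReal.toReal_nonneg
    have t1 : |(1 / h) * (∫ ω : Ω, (μt |X ω| - μt 0) * k (X ω / h))| ≤
        ℓ (A * h) * Bk * C := by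
      rw [abs_mul, abs_of_pos (one_div_pos.2 hh)]
      calc (1 / h) * |∫ ω : Ω, (μt |X ω| - μt 0) * k (X ω / h)|
          ≤ (1 / h) * (ℓ (A * h) * Bk * (C * h)) := by
            apply mul_le_mul_of_nonneg_left _ (one_div_pos.2 hh).le
            exact m1.trans (mul_le_mul_of_nonneg_left hCh (mul_nonneg (hℓnn _) hBk))
        _ = ℓ (A * h) * Bk * C := by field_simp
    have t2 : |(1 / h) * (∫ ω : Ω, (ψ h ω - ψ 0 ω) * k (X ω / h))| ≤ ℓ h * C := by
      rw [abs_mul, abs_of_pos (one_div_pos.2 hh)]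
      calc (1 / h) * |∫ ω : Ω, (ψ h ω - ψ 0 ω) * k (X ω / h)|
          ≤ (1 / h) * (ℓ h * (C * h)) := by
            apply mul_le_mul_of_nonneg_left _ (one_div_pos.2 hh).le
            exact m2.trans (mul_le_mul_of_nonneg_left hCh (hℓnn h))
        _ = ℓ h * C := by field_simp
    calc ‖F h‖ ≤ |(1 / h) * (∫ ω : Ω, (μt |X ω| - μt 0) * k (X ω / h))| +
          |(1 / h) * (∫ ω : Ω, (ψ h ω - ψ 0 ω) * k (X ω / h))| := by
          rw [hF]; exact abs_add_le _ _
      _ ≤ ℓ (A * h) * Bk * C + ℓ h * C := add_le_add t1 t2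
  -- conclude
  have hlim1 : Tendsto (fun h : ℝ => μt 0 * ((1 / h) * ∫ ω : Ω, k (X ω / h)))
      (nhdsWithin 0 (Ioi 0)) (nhds (μt 0 * c)) := hkint.const_mul _
  have hlim2 : Tendsto (fun h : ℝ => μt 0 * ((1 / h) * ∫ ω : Ω, k (X ω / h)))
      (nhdsWithin 0 (Ioi 0)) (nhds 0) := by
    have : Tendsto (fun h => -F h) (nhdsWithin (0:ℝ) (Ioi 0)) (nhds 0) := by
      simpa using hFtendsto.neg
    exact this.congr' (by filter_upwards [decomp] with h hh using hh.symm)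
  have hne : (nhdsWithin (0:ℝ) (Ioi 0)).NeBot := by
    exact nhdsGT_neBot 0
  have := tendsto_nhds_unique hlim1 hlim2
  have : μt 0 * c = 0 := this
  exact (mul_eq_zero.1 this).resolve_right (ne_of_gt hc)
end

section
/- Let ℓ : (0,1) → [0,∞) satisfy ℓ(h)·log log(h^{-1}) → 0 as h → 0, and suppose (without loss of generality) ℓ(h)·log log(h^{-1}) is nondecreasing in h near 0. Let h̲_n → 0 and h_n* = exp(−(log h̲_n^{-1})^{1/K}) with K > 1. Then ℓ(h_n*)·√(log log((h_n*)^{-1}))·√(log log(h_n*/h̲_n)) → 0. -/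
open Filter Set

/-- If `ℓ(h) log log h⁻¹ → 0` (nondecreasingly near 0), `h̲ₙ → 0` and
`hₙ* = exp(−(log h̲ₙ⁻¹)^{1/K})` with `K > 1`, then
`ℓ(hₙ*) √(log log (hₙ*)⁻¹) √(log log (hₙ*/h̲ₙ)) → 0`. -/
theorem modulus_loglog_product_vanishes (ℓ : ℝ → ℝ) (K : ℝ) (hK : 1 < K)
    (hℓnn : ∀ h, 0 ≤ ℓ h)
    (hℓ : Tendsto (fun h => ℓ h * Real.log (Real.log h⁻¹))
      (nhdsWithin 0 (Ioi 0)) (nhds 0))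
    (hmono : ∃ δ > (0 : ℝ), MonotoneOn (fun h => ℓ h * Real.log (Real.log h⁻¹)) (Ioo 0 δ))
    (hl : ℕ → ℝ) (hpos : ∀ n, 0 < hl n) (h0 : Tendsto hl atTop (nhds 0)) :
    Tendsto (fun n =>
        ℓ (Real.exp (-(Real.log (hl n)⁻¹) ^ (1 / K))) *
          Real.sqrt (Real.log (Real.log (Real.exp (-(Real.log (hl n)⁻¹) ^ (1 / K)))⁻¹)) *
          Real.sqrt (Real.log (Real.log (Real.exp (-(Real.log (hl n)⁻¹) ^ (1 / K)) / hl n))))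
      atTop (nhds 0) := by
  have hK0 : (0:ℝ) < K := lt_trans one_pos hK
  have hKinv : (0:ℝ) < 1 / K := by positivity
  set a : ℕ → ℝ := fun n => Real.log (hl n)⁻¹ with ha_def
  have ha : Tendsto a atTop atTop := by
    have h1 : Tendsto hl atTop (nhdsWithin 0 (Ioi 0)) :=
      tendsto_nhdsWithin_iff.mpr ⟨h0, Eventually.of_forall hpos⟩
    exact Real.tendsto_log_atTop.comp (tendsto_inv_nhdsGT_zero.comp h1)
  have hb : Tendsto (fun n => (a n) ^ (1 / K)) atTop atTop :=
    (tendsto_rpow_atTop hKinv).comp ha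
  set g : ℕ → ℝ := fun n => Real.exp (-(a n) ^ (1 / K)) with hg_def
  have hg0 : Tendsto g atTop (nhdsWithin 0 (Ioi 0)) := by
    refine tendsto_nhdsWithin_iff.mpr ⟨?_, Eventually.of_forall fun n => Real.exp_pos _⟩
    exact Real.tendsto_exp_neg_atTop_nhds_zero.comp hb
  have hC : Tendsto (fun n => ℓ (g n) * Real.log (Real.log (g n)⁻¹)) atTop (nhds 0) :=
    hℓ.comp hg0
  have hC' : Tendsto (fun n => Real.sqrt K * (ℓ (g n) * Real.log (Real.log (g n)⁻¹)))
      atTop (nhds 0) := by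
    simpa using hC.const_mul (Real.sqrt K)
  -- eventual facts
  have hev : ∀ᶠ n in atTop, 4 ≤ a n ∧ 2 ≤ (a n) ^ (1 - 1/K) := by
    have h2 : Tendsto (fun n => (a n) ^ (1 - 1/K)) atTop atTop :=
      (tendsto_rpow_atTop (by have := (div_lt_one hK0).mpr hK; linarith)).comp ha
    exact (ha.eventually_ge_atTop 4).and (h2.eventually_ge_atTop 2)
  refine squeeze_zero' ?_ ?_ hC'
  · exact Eventually.of_forall fun n =>
      mul_nonneg (mul_nonneg (hℓnn _) (Real.sqrt_nonneg _)) (Real.sqrt_nonneg _)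
  · filter_upwards [hev] with n hn
    obtain ⟨hx4, hx2⟩ := hn
    set x := a n with hx_def
    have hx0 : (0:ℝ) < x := by linarith
    set b := x ^ (1/K) with hb_def
    have hbnn : 0 ≤ b := Real.rpow_nonneg hx0.le _
    have hbx : b ≤ x / 2 := by
      have hmul : b * x ^ (1 - 1/K) = x := by
        rw [hb_def, ← Real.rpow_add hx0]
        norm_num
      nlinarith [Real.rpow_nonneg hx0.le (1 - 1/K)]
    have hxb0 : (0:ℝ) < x - b := by linarith
    have hlogg : Real.log (g n)⁻¹ = b := by
      have hgn : g n = Real.exp (-b) := rfl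
      rw [hgn, Real.log_inv, Real.log_exp, neg_neg]
    have hlogdiv : Real.log (g n / hl n) = x - b := by
      have hgn : g n = Real.exp (-b) := rfl
      have hxe : x = -Real.log (hl n) := by rw [hx_def, ha_def]; exact Real.log_inv _
      rw [hgn, Real.log_div (Real.exp_pos _).ne' (hpos n).ne', Real.log_exp, hxe]
      ring
    have hlogb : Real.log b = (1/K) * Real.log x := Real.log_rpow hx0 _
    have hlx : (0:ℝ) ≤ Real.log x := Real.log_nonneg (by linarith)
    have hlogle : Real.log (x - b) ≤ Real.log x := Real.log_le_log hxb0 (by linarith)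
    have hsK : (0:ℝ) < Real.sqrt K := Real.sqrt_pos.mpr hK0
    have hss : Real.sqrt K * Real.sqrt K = K := Real.mul_self_sqrt hK0.le
    have key : Real.sqrt (1/K) = Real.sqrt K / K := by
      rw [one_div, Real.sqrt_inv, eq_div_iff hK0.ne', inv_mul_eq_div, div_eq_iff hsK.ne', hss]
    have hmain : ℓ (g n) * Real.sqrt (Real.log b) * Real.sqrt (Real.log (x - b)) ≤
        Real.sqrt K * (ℓ (g n) * Real.log b) := by
      have hsq : Real.sqrt (Real.log b) * Real.sqrt (Real.log (x - b)) ≤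
          Real.sqrt (1/K) * Real.log x := by
        calc Real.sqrt (Real.log b) * Real.sqrt (Real.log (x - b))
            ≤ Real.sqrt (Real.log b) * Real.sqrt (Real.log x) :=
              mul_le_mul_of_nonneg_left (Real.sqrt_le_sqrt hlogle) (Real.sqrt_nonneg _)
          _ = Real.sqrt (1/K) * Real.log x := by
              rw [hlogb, Real.sqrt_mul hKinv.le, mul_assoc, Real.mul_self_sqrt hlx]
      calc ℓ (g n) * Real.sqrt (Real.log b) * Real.sqrt (Real.log (x - b))
          = ℓ (g n) * (Real.sqrt (Real.log b) * Real.sqrt (Real.log (x - b))) := by ring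
        _ ≤ ℓ (g n) * (Real.sqrt (1/K) * Real.log x) :=
            mul_le_mul_of_nonneg_left hsq (hℓnn _)
        _ = Real.sqrt K * (ℓ (g n) * Real.log b) := by rw [key, hlogb]; ring
    calc ℓ (g n) * Real.sqrt (Real.log (Real.log (g n)⁻¹)) *
          Real.sqrt (Real.log (Real.log (g n / hl n)))
        = ℓ (g n) * Real.sqrt (Real.log b) * Real.sqrt (Real.log (x - b)) := by
          rw [hlogg, hlogdiv]
      _ ≤ Real.sqrt K * (ℓ (g n) * Real.log b) := hmain
      _ = Real.sqrt K * (ℓ (g n) * Real.log (Real.log (g n)⁻¹)) := by rw [hlogg]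
end
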